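/- Given Γ : Type, Φ : Γ → Prop with cof (Φ x) for all x, ι : Γ|Φ → Γ the first projection, a family G : Γ → Type, a fibration structure α : isFib (G ∘ ι) and a fibration structure γ : isFib G, there exists a fibration structure γ' : isFib G such that γ'[ι] = α. -/

import Mathlib

namespace CCHM

variable {I : Type}

/-- The two endpoints of the interval: `false ↦ i0`, `true ↦ i1`;
negation `!e` swaps the endpoints. -/
def pt (i0 i1 : I) : Bool → I := fun e => bif e then i1 else i0

/-- A composition structure for an `I`-indexed family of types:
any cofibrant partial path extended at endpoint `e` is extended at the other
endpoint `!e`. -/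
def Comp (i0 i1 : I) (cof : Prop → Prop) (e : Bool) (A : I → Type) : Type :=
  (φ : Prop) → cof φ → (f : φ → (i : I) → A i) →
    (a0 : A (pt i0 i1 e)) → (∀ u : φ, f u (pt i0 i1 e) = a0) →
    { a1 : A (pt i0 i1 (!e)) // ∀ u : φ, f u (pt i0 i1 (!e)) = a1 }

/-- A (CCHM) fibration structure on a family `A : Γ → Type`. -/
def isFib (i0 i1 : I) (cof : Prop → Prop) {Γ : Type} (A : Γ → Type) : Type :=
  (e : Bool) → (p : I → Γ) → Comp i0 i1 cof e (fun i => A (p i))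

/-- Reindexing of fibration structures: `α[γ] e p := α e (γ ∘ p)`. -/
def reind (i0 i1 : I) (cof : Prop → Prop) {Δ Γ : Type} {A : Γ → Type}
    (γ : Δ → Γ) (α : isFib i0 i1 cof A) : isFib i0 i1 cof (fun x => A (γ x)) :=
  fun e p => α e (fun i => γ (p i))

/-!
To compose along a path `p` in `Γ`, extend the given tube `f` by the `α`-filler of the same
problem on the part where `p` lies in `Φ` (fillers come from `α`-compositions along connections),
and compose this larger tube with `γ`. When `p` lies in `Φ` the extended tube is total, so the
`γ`-composite is forced to be the end of the `α`-filler, which is the `α`-composite.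
-/

section Glue

variable {X : Type} {A B : Prop}

/-- Classical elimination of `A ∨ B` into a type; for compatible `f` and `g` it is their
gluing. -/
noncomputable def orGlue (f : A → X) (g : B → X) (v : A ∨ B) : X :=
  open Classical in if h : A then f h else g (v.resolve_left h)

theorem orGlue_left (f : A → X) (g : B → X) (v : A ∨ B) (a : A) : orGlue f g v = f a :=
  dif_pos a

theorem orGlue_right {f : A → X} {g : B → X} (hfg : ∀ a b, f a = g b) (v : A ∨ B) (b : B) :
    orGlue f g v = g b := by
  unfold orGlue
  split_ifs with h
  · exact hfg h b
  · rfl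

end Glue

/-- A connection towards the endpoint `e`: `op i` is a path from `pt e` to `i`, constant
for `i = pt e` and the identity for `i = pt !e`. -/
structure Connection (i0 i1 : I) (e : Bool) where
  op : I → I → I
  op_right_start : ∀ i, op i (pt i0 i1 e) = pt i0 i1 e
  op_right_end : ∀ i, op i (pt i0 i1 (!e)) = i
  op_left_start : ∀ j, op (pt i0 i1 e) j = pt i0 i1 e
  op_left_end : ∀ j, op (pt i0 i1 (!e)) j = j

def meetJoinConnection {i0 i1 : I} (cnx dsj : I → I → I)
    (ax3 : ∀ x, cnx i0 x = i0 ∧ cnx x i0 = i0 ∧ cnx i1 x = x ∧ cnx x i1 = x)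
    (ax4 : ∀ x, dsj i0 x = x ∧ dsj x i0 = x ∧ dsj i1 x = i1 ∧ dsj x i1 = i1) :
    (e : Bool) → Connection i0 i1 e
  | false => ⟨cnx, fun i => (ax3 i).2.1, fun i => (ax3 i).2.2.2, fun j => (ax3 j).1,
      fun j => (ax3 j).2.2.1⟩
  | true => ⟨dsj, fun i => (ax4 i).2.2.2, fun i => (ax4 i).2.1, fun j => (ax4 j).2.2.1,
      fun j => (ax4 j).1⟩

theorem cof_eq_pt {i0 i1 : I} {cof : Prop → Prop} (ax5 : ∀ i : I, cof (i = i0) ∧ cof (i = i1))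
    (i : I) : ∀ e, cof (i = pt i0 i1 e)
  | false => (ax5 i).1
  | true => (ax5 i).2

theorem pt_not_ne_pt {i0 i1 : I} (ax2 : i0 ≠ i1) : ∀ e, pt i0 i1 (!e) ≠ pt i0 i1 e
  | false => ax2.symm
  | true => ax2

section Fill

variable {i0 i1 : I} {cof : Prop → Prop} {e : Bool} {B : I → Type}

theorem comp_congr (κ : ∀ r : I → I, Comp i0 i1 cof e (fun j => B (r j)))
    {r r' : I → I} (hr : r = r') {φ φ' : Prop} (hφ : φ = φ') (cφ : cof φ) (cφ' : cof φ')
    {f : φ → ∀ j, B (r j)} {f' : φ' → ∀ j, B (r' j)} (hf : f ≍ f')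
    {a0 : B (r (pt i0 i1 e))} {a0' : B (r' (pt i0 i1 e))} (ha : a0 ≍ a0')
    (ext : ∀ u, f u (pt i0 i1 e) = a0) (ext' : ∀ u, f' u (pt i0 i1 e) = a0') :
    (κ r φ cφ f a0 ext).val ≍ (κ r' φ' cφ' f' a0' ext').val := by
  subst hr hφ
  cases hf
  cases ha
  rfl

variable (c : Connection i0 i1 e) {φ : Prop}

/-- The tube whose composite along `c.op i` is the filler at `i`. -/
noncomputable def fillTube (f : φ → ∀ i, B i) (a0 : B (pt i0 i1 e)) (i : I) :
    φ ∨ i = pt i0 i1 e → ∀ j, B (c.op i j) :=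
  orGlue (fun u j => f u (c.op i j))
    (fun hi j => cast (congrArg B (by rw [hi, c.op_left_start])) a0)

variable {f : φ → ∀ i, B i} {a0 : B (pt i0 i1 e)}

theorem fillTube_left (i : I) (v : φ ∨ i = pt i0 i1 e) (u : φ) :
    fillTube c f a0 i v = fun j => f u (c.op i j) :=
  orGlue_left _ _ v u

theorem fillTube_right (ext : ∀ u, f u (pt i0 i1 e) = a0) (i : I) (v : φ ∨ i = pt i0 i1 e)
    (hi : i = pt i0 i1 e) :
    fillTube c f a0 i v = fun j => cast (congrArg B (by rw [hi, c.op_left_start])) a0 := by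
  refine orGlue_right (fun u hi => funext fun j => eq_of_heq ?_) v hi
  subst hi
  exact (congr_arg_heq (f u) (c.op_left_start j)).trans ((ext u).heq.trans (cast_heq _ _).symm)

theorem fillTube_start (ext : ∀ u, f u (pt i0 i1 e) = a0) (i : I) (v : φ ∨ i = pt i0 i1 e) :
    fillTube c f a0 i v (pt i0 i1 e) = cast (congrArg B (c.op_right_start i).symm) a0 := by
  rcases v with u | hi
  · rw [fillTube_left c i _ u]
    exact eq_of_heq ((congr_arg_heq (f u) (c.op_right_start i)).trans
      ((ext u).heq.trans (cast_heq _ _).symm))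
  · rw [fillTube_right c ext i _ hi]

variable (ext : ∀ u, f u (pt i0 i1 e) = a0)
  (κ : ∀ r : I → I, Comp i0 i1 cof e (fun j => B (r j)))
  (cφ : ∀ i, cof (φ ∨ i = pt i0 i1 e))

noncomputable def fillComp (i : I) :
    { a1 : B (c.op i (pt i0 i1 (!e))) // ∀ v, fillTube c f a0 i v (pt i0 i1 (!e)) = a1 } :=
  κ (c.op i) _ (cφ i) (fillTube c f a0 i) _ (fillTube_start c ext i)

noncomputable def fill (i : I) : B i :=
  cast (congrArg B (c.op_right_end i)) (fillComp c ext κ cφ i).val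

theorem fill_extends (u : φ) (i : I) : f u i = fill c ext κ cφ i := by
  have h := (fillComp c ext κ cφ i).property (Or.inl u)
  rw [fillTube_left c i _ u] at h
  exact eq_of_heq ((congr_arg_heq (f u) (c.op_right_end i).symm).trans
    (h.heq.trans (cast_heq _ _).symm))

theorem fill_start : fill c ext κ cφ (pt i0 i1 e) = a0 := by
  have h := (fillComp c ext κ cφ (pt i0 i1 e)).property (Or.inr rfl)
  rw [fillTube_right c ext _ _ rfl] at h
  exact eq_of_heq ((cast_heq _ _).trans (h.symm.heq.trans (cast_heq _ _)))

/-- At the far end the filler is the composite itself: there the face `i = pt e` is empty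
and `c.op` is the identity. -/
theorem fill_end (ax2 : i0 ≠ i1) (cφ' : cof φ) :
    fill c ext κ cφ (pt i0 i1 (!e)) = (κ id φ cφ' f a0 ext).val := by
  have hφ : (φ ∨ pt i0 i1 (!e) = pt i0 i1 e) = φ :=
    propext (or_iff_left (pt_not_ne_pt ax2 e))
  have hf : fillTube c f a0 (pt i0 i1 (!e)) ≍ f := by
    refine Function.hfunext hφ fun v u _ => ?_
    rw [fillTube_left c _ v u]
    exact Function.hfunext rfl fun j _ hj => by
      cases hj
      exact congr_arg_heq (f u) (c.op_left_end j)
  exact eq_of_heq ((cast_heq _ _).trans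
    (comp_congr κ (funext c.op_left_end) hφ _ cφ' hf (cast_heq _ _) _ ext))

end Fill

section Adapt

variable {i0 i1 : I} {cof : Prop → Prop} {Γ : Type} {Φ : Γ → Prop} {G : Γ → Type}
  (α : isFib i0 i1 cof (fun y : { x : Γ // Φ x } => G y.1))
  (c : (e : Bool) → Connection i0 i1 e)
  {e : Bool} {p : I → Γ} {φ : Prop} (cφ : ∀ i, cof (φ ∨ i = pt i0 i1 e))
  {f : φ → ∀ i, G (p i)} {a0 : G (p (pt i0 i1 e))} (ext : ∀ u, f u (pt i0 i1 e) = a0)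

noncomputable def adaptTube : φ ∨ (∀ i, Φ (p i)) → ∀ i, G (p i) :=
  orGlue f fun hp => fill (c e) ext (fun r => α e fun j => ⟨p (r j), hp (r j)⟩) cφ

theorem adaptTube_left (v : φ ∨ ∀ i, Φ (p i)) (u : φ) : adaptTube α c cφ ext v = f u :=
  orGlue_left _ _ v u

theorem adaptTube_right (v : φ ∨ ∀ i, Φ (p i)) (hp : ∀ i, Φ (p i)) :
    adaptTube α c cφ ext v =
      fill (c e) ext (fun r => α e fun j => ⟨p (r j), hp (r j)⟩) cφ :=
  orGlue_right (fun u _ => funext (fill_extends (c e) ext _ cφ u)) v hp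

theorem adaptTube_start (v : φ ∨ ∀ i, Φ (p i)) :
    adaptTube α c cφ ext v (pt i0 i1 e) = a0 := by
  rcases v with u | hp
  · rw [adaptTube_left α c cφ ext _ u, ext]
  · rw [adaptTube_right α c cφ ext _ hp, fill_start]

end Adapt

section AdaptFib

variable {i0 i1 : I} {cof : Prop → Prop} {Γ : Type} {Φ : Γ → Prop} {G : Γ → Type}
  (ax5 : ∀ i : I, cof (i = i0) ∧ cof (i = i1))
  (ax6 : ∀ φ ψ : Prop, cof φ → cof ψ → cof (φ ∨ ψ))
  (ax8 : ∀ φ : I → Prop, (∀ i, cof (φ i)) → cof (∀ i, φ i)) (hΦ : ∀ x, cof (Φ x))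
  (α : isFib i0 i1 cof (fun y : { x : Γ // Φ x } => G y.1))
  (c : (e : Bool) → Connection i0 i1 e)
  (γ : isFib i0 i1 cof G)

noncomputable def adaptComp (e : Bool) {p : I → Γ} {φ : Prop} (cφ : cof φ)
    {f : φ → ∀ i, G (p i)} {a0 : G (p (pt i0 i1 e))} (ext : ∀ u, f u (pt i0 i1 e) = a0) :
    { a1 : G (p (pt i0 i1 (!e))) // ∀ v : φ ∨ ∀ i, Φ (p i),
      adaptTube α c (fun i => ax6 _ _ cφ (cof_eq_pt ax5 i e)) ext v (pt i0 i1 (!e)) = a1 } :=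
  γ e p _ (ax6 _ _ cφ (ax8 _ fun i => hΦ (p i))) _ a0 (adaptTube_start α c _ ext)

noncomputable def adaptFib : isFib i0 i1 cof G :=
  fun e _ _ cφ _ _ ext =>
    ⟨(adaptComp ax5 ax6 ax8 hΦ α c γ e cφ ext).val, fun u => by
      simpa only [adaptTube_left α c _ ext _ u] using
        (adaptComp ax5 ax6 ax8 hΦ α c γ e cφ ext).property (Or.inl u)⟩

theorem adaptFib_of_forall_mem (ax2 : i0 ≠ i1) (e : Bool) {p : I → Γ} (hp : ∀ i, Φ (p i))
    {φ : Prop} (cφ : cof φ) {f : φ → ∀ i, G (p i)} {a0 : G (p (pt i0 i1 e))}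
    (ext : ∀ u, f u (pt i0 i1 e) = a0) :
    (adaptFib ax5 ax6 ax8 hΦ α c γ e p φ cφ f a0 ext).val =
      (α e (fun i => ⟨p i, hp i⟩) φ cφ f a0 ext).val := by
  have h := (adaptComp ax5 ax6 ax8 hΦ α c γ e cφ ext).property (Or.inr hp)
  rw [adaptTube_right α c _ ext _ hp, fill_end _ _ _ _ ax2 cφ] at h
  exact h.symm

theorem reind_adaptFib (ax2 : i0 ≠ i1) :
    reind i0 i1 cof Subtype.val (adaptFib ax5 ax6 ax8 hΦ α c γ) = α := by
  funext e p φ cφ f a0 ext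
  exact Subtype.ext <|
    adaptFib_of_forall_mem ax5 ax6 ax8 hΦ α c γ ax2 e (fun i => (p i).2) cφ ext

end AdaptFib

/-- Adapting composition structures: any fibration structure on `G` can be replaced
by one that restricts along `ι : Γ|Φ ↪ Γ` to a given fibration structure on
`G ∘ ι`. -/
theorem adapt_comp (i0 i1 : I) (cof : Prop → Prop)
    (ax2 : i0 ≠ i1)
    (cnx dsj : I → I → I)
    (ax3 : ∀ x, cnx i0 x = i0 ∧ cnx x i0 = i0 ∧ cnx i1 x = x ∧ cnx x i1 = x)
    (ax4 : ∀ x, dsj i0 x = x ∧ dsj x i0 = x ∧ dsj i1 x = i1 ∧ dsj x i1 = i1)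
    (ax5 : ∀ i : I, cof (i = i0) ∧ cof (i = i1))
    (ax6 : ∀ φ ψ : Prop, cof φ → cof ψ → cof (φ ∨ ψ))
    (ax8 : ∀ φ : I → Prop, (∀ i, cof (φ i)) → cof (∀ i, φ i))
    (Γ : Type) (Φ : Γ → Prop) (hΦ : ∀ x, cof (Φ x))
    (G : Γ → Type)
    (α : isFib i0 i1 cof (fun y : { x : Γ // Φ x } => G y.1))
    (γfib : isFib i0 i1 cof G) :
    ∃ γ' : isFib i0 i1 cof G,
      reind i0 i1 cof (fun y : { x : Γ // Φ x } => y.1) γ' = α := by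
  exact ⟨_, reind_adaptFib ax5 ax6 ax8 hΦ α (meetJoinConnection cnx dsj ax3 ax4) γfib ax2⟩

end CCHM
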